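/- Let k be a positive integer and let n be an integer with 1 ≤ n < 2^k, with hypercube representation n = Σ_{ℓ=0}^{i} C(k,ℓ) + m where 0 ≤ i ≤ k−1 and 0 ≤ m < C(k, i+1). Then there exists a set S ⊆ {0,1}^k with |S| = n such that the induced subgraph Q_k[S] has at least Σ_{ℓ=0}^{i−1} C(k,ℓ) + m^(k−i−1) full vertices; that is, φ_k(n) ≥ Σ_{ℓ=0}^{i−1} C(k,ℓ) + m^(k−i−1) (the sum being empty, i.e., 0, when i = 0). -/

import Mathlib

/-- The upper `i`-boundary `m^(i)`, computed greedily from the unique binomial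
representation `m = C(n_i,i) + C(n_{i-1},i-1) + ... + C(n_j,j)`
(with `n_i > n_{i-1} > ... > n_j ≥ j ≥ 1`) as
`m^(i) = C(n_i,i+1) + C(n_{i-1},i) + ... + C(n_j,j+1)`;
by convention `0^(i) = 0`. -/
def ub : ℕ → ℕ → ℕ
  | 0, _ => 0
  | i + 1, m =>
    if m = 0 then 0
    else
      Nat.choose (Nat.findGreatest (fun t => Nat.choose t (i + 1) ≤ m) (m + i + 1)) (i + 2) +
        ub i (m - Nat.choose (Nat.findGreatest (fun t => Nat.choose t (i + 1) ≤ m) (m + i + 1)) (i + 1))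

open scoped Classical in
/-- The `k`-dimensional hypercube graph `Q_k`: vertices are the binary strings
`{0,1}^k` (modelled as `Fin k → Bool`), two vertices being adjacent iff they differ
in exactly one coordinate. -/
noncomputable def Qcube (k : ℕ) : SimpleGraph (Fin k → Bool) :=
  SimpleGraph.fromRel fun x y =>
    (Finset.univ.filter fun j : Fin k => x j ≠ y j).card = 1

open scoped Classical in
/-- The number of full vertices (vertices of degree `k`) of the subgraph of `Q_k`
induced by the vertex set `S`. -/
noncomputable def fullCount (k : ℕ) (S : Finset (Fin k → Bool)) : ℕ :=
  (S.filter fun v => (S.filter fun w => (Qcube k).Adj v w).card = k).card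

open scoped Classical in
/-- `phi k n` is the maximum, over all sets `S ⊆ {0,1}^k` with `|S| = n`, of the
number of full vertices of the induced subgraph `Q_k[S]` (with `phi k 0 = 0`). -/
noncomputable def phi (k n : ℕ) : ℕ :=
  ((Finset.univ : Finset (Fin k → Bool)).powersetCard n).sup (fullCount k)

open scoped Classical

def toVec (k : ℕ) (A : Finset (Fin k)) : Fin k → Bool := fun j => decide (j ∈ A)

lemma toVec_inj (k : ℕ) : Function.Injective (toVec k) := by
  intro A B h
  ext j
  have h2 := congrFun h j
  simpa [toVec] using h2

def flp {k : ℕ} (v : Fin k → Bool) (j : Fin k) : Fin k → Bool := Function.update v j (!(v j))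

lemma flp_inj {k : ℕ} (v : Fin k → Bool) : Function.Injective (flp v) := by
  intro a b h
  by_contra hab
  have h1 := congrFun h a
  rw [flp, flp, Function.update_self, Function.update_of_ne hab] at h1
  exact (Bool.not_ne_self (v a)) h1

lemma adj_iff {k : ℕ} {v w : Fin k → Bool} : (Qcube k).Adj v w ↔ ∃ j, w = flp v j := by
  have hsymm : ∀ x y : Fin k → Bool,
      (Finset.univ.filter fun j : Fin k => y j ≠ x j) = (Finset.univ.filter fun j : Fin k => x j ≠ y j) := by
    intro x y; apply Finset.filter_congr; intro j _; simp [ne_comm]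
  constructor
  · intro h
    rw [Qcube, SimpleGraph.fromRel_adj] at h
    obtain ⟨hne, h⟩ := h
    have hcard : (Finset.univ.filter fun j : Fin k => v j ≠ w j).card = 1 := by
      rcases h with h | h
      · exact h
      · rw [← hsymm]; exact h
    obtain ⟨j0, hj0⟩ := Finset.card_eq_one.1 hcard
    refine ⟨j0, ?_⟩
    funext j'
    by_cases hj' : j' = j0
    · subst hj'
      have : j' ∈ Finset.univ.filter fun j : Fin k => v j ≠ w j := by rw [hj0]; exact Finset.mem_singleton_self _
      rw [Finset.mem_filter] at this
      have h3 := this.2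
      rw [flp, Function.update_self]
      revert h3; cases v j' <;> cases w j' <;> simp
    · have : j' ∉ Finset.univ.filter fun j : Fin k => v j ≠ w j := by rw [hj0]; simp [hj']
      rw [Finset.mem_filter] at this
      push_neg at this
      have h3 := this (Finset.mem_univ j')
      rw [flp, Function.update_of_ne hj']
      revert h3; cases v j' <;> cases w j' <;> simp
  · rintro ⟨j, rfl⟩
    rw [Qcube, SimpleGraph.fromRel_adj]
    constructor
    · intro h
      have := congrFun h j
      rw [flp, Function.update_self] at this
      exact (Bool.not_ne_self (v j)) this.symm
    · left
      have : (Finset.univ.filter fun j' : Fin k => v j' ≠ flp v j j') = {j} := by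
        ext j'
        simp only [Finset.mem_filter, Finset.mem_univ, true_and, Finset.mem_singleton]
        by_cases hj' : j' = j
        · subst hj'; simp [flp, Function.update_self]
        · simp [flp, Function.update_of_ne hj', hj']
      rw [this, Finset.card_singleton]

lemma full_of_flips {k : ℕ} (S : Finset (Fin k → Bool)) (v : Fin k → Bool)
    (h : ∀ j, flp v j ∈ S) :
    (S.filter fun w => (Qcube k).Adj v w).card = k := by
  have he : S.filter (fun w => (Qcube k).Adj v w) = Finset.univ.image (flp v) := by
    ext w
    simp only [Finset.mem_filter, Finset.mem_image, Finset.mem_univ, true_and]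
    constructor
    · rintro ⟨-, hadj⟩
      obtain ⟨j, rfl⟩ := adj_iff.1 hadj
      exact ⟨j, rfl⟩
    · rintro ⟨j, rfl⟩
      exact ⟨h j, adj_iff.2 ⟨j, rfl⟩⟩
  rw [he, Finset.card_image_of_injective _ (flp_inj v), Finset.card_univ, Fintype.card_fin]

lemma fullCount_ge {k : ℕ} (S F : Finset (Fin k → Bool))
    (hF : ∀ v ∈ F, v ∈ S ∧ ∀ j, flp v j ∈ S) : F.card ≤ fullCount k S := by
  unfold fullCount
  apply Finset.card_le_card
  intro v hv
  obtain ⟨h1, h2⟩ := hF v hv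
  rw [Finset.mem_filter]
  exact ⟨h1, full_of_flips S v h2⟩

lemma card_filter_card_lt (k j : ℕ) :
    (((Finset.univ : Finset (Fin k)).powerset).filter (fun A => A.card < j)).card
      = ∑ ℓ ∈ Finset.range j, Nat.choose k ℓ := by
  have he : ((Finset.univ : Finset (Fin k)).powerset).filter (fun A => A.card < j)
      = (Finset.range j).biUnion (fun ℓ => (Finset.univ : Finset (Fin k)).powersetCard ℓ) := by
    ext A
    simp only [Finset.mem_filter, Finset.mem_powerset, Finset.mem_biUnion, Finset.mem_range,
      Finset.mem_powersetCard]
    constructor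
    · rintro ⟨h1, h2⟩; exact ⟨A.card, h2, h1, rfl⟩
    · rintro ⟨ℓ, h1, h2, h3⟩; exact ⟨h2, h3 ▸ h1⟩
  rw [he, Finset.card_biUnion]
  · simp [Finset.card_powersetCard]
  · intro a _ b _ hab
    rw [Function.onFun, Finset.disjoint_left]
    intro A hA hB
    rw [Finset.mem_powersetCard] at hA hB
    omega

lemma flp_toVec {k : ℕ} (A : Finset (Fin k)) (j : Fin k) :
    flp (toVec k A) j = toVec k (if j ∈ A then A.erase j else insert j A) := by
  funext j'
  by_cases h : j' = j
  · subst h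
    rw [flp, Function.update_self, toVec, toVec]
    by_cases hj : j' ∈ A <;> simp [hj]
  · rw [flp, Function.update_of_ne h, toVec, toVec]
    by_cases hj : j ∈ A <;> simp [hj, Finset.mem_erase, Finset.mem_insert, h]


lemma ub_zero (r : ℕ) : ub r 0 = 0 := by cases r <;> simp [ub]

open Finset in
lemma core {α : Type*} [DecidableEq α] :
    ∀ (r : ℕ) (G : Finset α) (m : ℕ), m ≤ G.card.choose r →
    ∃ M : Finset (Finset α), (∀ A ∈ M, A ⊆ G ∧ A.card = r) ∧ M.card = m ∧
      ub r m ≤ ((G.powersetCard (r+1)).filter (fun D => ∀ j ∈ D, D.erase j ∈ M)).card := by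
  intro r
  induction r with
  | zero =>
    intro G m hm
    rw [Nat.choose_zero_right] at hm
    interval_cases m
    · exact ⟨∅, by simp, by simp, by simp [ub]⟩
    · exact ⟨{∅}, by simp, by simp, by simp [ub]⟩
  | succ r IH =>
    intro G m hm
    by_cases h0 : m = 0
    · subst h0; exact ⟨∅, by simp, by simp, by simp [ub_zero]⟩
    have hm1 : 1 ≤ m := Nat.one_le_iff_ne_zero.2 h0
    set t := Nat.findGreatest (fun t => Nat.choose t (r + 1) ≤ m) (m + r + 1) with ht
    have hPbase : Nat.choose (r+1) (r+1) ≤ m := by rw [Nat.choose_self]; exact hm1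
    have htge : r + 1 ≤ t := Nat.le_findGreatest (by omega) hPbase
    have htP : Nat.choose t (r+1) ≤ m := by
      rw [ht]; exact Nat.findGreatest_spec (P := fun t => Nat.choose t (r + 1) ≤ m) (by omega) hPbase
    have htmax : m < Nat.choose (t+1) (r+1) := by
      by_cases hb : t + 1 ≤ m + r + 1
      · have hng := Nat.findGreatest_is_greatest (P := fun t => Nat.choose t (r + 1) ≤ m)
          (k := t+1) (by omega) hb
        omega
      · have h1 : m + r + 2 ≤ t + 1 := by omega
        have h2 : Nat.choose (m+r+2) (r+1) ≤ Nat.choose (t+1) (r+1) := Nat.choose_le_choose _ (by omega)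
        have h3 : Nat.choose (m+r+2) (r+1) = Nat.choose (m+r+2) (m+1) := by
          have := Nat.choose_symm (n := m+r+2) (k := m+1) (by omega)
          simpa [show m+r+2-(m+1) = r+1 by omega] using this
        have h4 : Nat.choose (m+2) (m+1) ≤ Nat.choose (m+r+2) (m+1) := Nat.choose_le_choose _ (by omega)
        have h5 : Nat.choose (m+2) (m+1) = m + 2 := by
          simpa using Nat.choose_succ_self_right (m+1)
        omega
    have hGr : r + 1 ≤ G.card := by
      by_contra h; push_neg at h
      rw [Nat.choose_eq_zero_of_lt h] at hm; omega
    have htG : t ≤ G.card := by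
      by_contra h; push_neg at h
      have h2 : Nat.choose (G.card+1) (r+1) ≤ Nat.choose t (r+1) := Nat.choose_le_choose _ (by omega)
      have h3 : Nat.choose (G.card+1) (r+1) = Nat.choose G.card r + Nat.choose G.card (r+1) :=
        Nat.choose_succ_succ' G.card r
      have h4 : 0 < Nat.choose G.card r := Nat.choose_pos (by omega)
      omega
    obtain ⟨Gt, hGtsub, hGtcard⟩ := Finset.exists_subset_card_eq htG
    have hsucc : Nat.choose (t+1) (r+1) = Nat.choose t r + Nat.choose t (r+1) :=
      Nat.choose_succ_succ' t r
    have hub : ub (r+1) m = Nat.choose t (r+2) + ub r (m - Nat.choose t (r+1)) := by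
      rw [ub, if_neg h0]
    set m' := m - Nat.choose t (r+1) with hm'
    have hm'le : m' ≤ Nat.choose t r := by omega
    by_cases hm'0 : m' = 0
    · -- M := all (r+1)-subsets of Gt
      refine ⟨Gt.powersetCard (r+1), ?_, ?_, ?_⟩
      · intro A hA
        rw [Finset.mem_powersetCard] at hA
        exact ⟨hA.1.trans hGtsub, hA.2⟩
      · rw [Finset.card_powersetCard, hGtcard]; omega
      · rw [hub, hm'0, ub_zero, Nat.add_zero]
        have hsub : Gt.powersetCard (r+2) ⊆
            (G.powersetCard (r+1+1)).filter (fun D => ∀ j ∈ D, D.erase j ∈ Gt.powersetCard (r+1)) := by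
          intro D hD
          rw [Finset.mem_powersetCard] at hD
          rw [Finset.mem_filter, Finset.mem_powersetCard]
          refine ⟨⟨hD.1.trans hGtsub, hD.2⟩, fun j hj => ?_⟩
          rw [Finset.mem_powersetCard]
          exact ⟨(Finset.erase_subset _ _).trans hD.1, by simp [Finset.card_erase_of_mem hj, hD.2]⟩
        calc t.choose (r+2) = (Gt.powersetCard (r+2)).card := by
              rw [Finset.card_powersetCard, hGtcard]
          _ ≤ _ := Finset.card_le_card hsub
    · have htltG : t < G.card := by
        by_contra h; push_neg at h
        have : Nat.choose G.card (r+1) ≤ Nat.choose t (r+1) := Nat.choose_le_choose _ h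
        omega
      have hne : Gt ≠ G := by intro h; rw [h] at hGtcard; omega
      obtain ⟨x, hxG, hxGt⟩ := Finset.exists_of_ssubset (hGtsub.ssubset_of_ne hne)
      obtain ⟨M', hM'mem, hM'card, hM'cov⟩ := IH Gt m' (by rw [hGtcard]; exact hm'le)
      have hxnot : ∀ A ∈ M', x ∉ A := fun A hA hx => hxGt ((hM'mem A hA).1 hx)
      set M : Finset (Finset α) := Gt.powersetCard (r+1) ∪ M'.image (insert x) with hM
      have hdis : Disjoint (Gt.powersetCard (r+1)) (M'.image (insert x)) := by
        rw [Finset.disjoint_left]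
        intro A hA hA'
        rw [Finset.mem_powersetCard] at hA
        obtain ⟨B, hB, rfl⟩ := Finset.mem_image.1 hA'
        exact hxGt (hA.1 (Finset.mem_insert_self x B))
      have hinj : Set.InjOn (insert x) (M' : Set (Finset α)) := by
        intro A hA B hB h
        have h2 := congrArg (Finset.erase · x) h
        simpa [Finset.erase_insert (hxnot A hA), Finset.erase_insert (hxnot B hB)] using h2
      refine ⟨M, ?_, ?_, ?_⟩
      · intro A hA
        rw [hM, Finset.mem_union] at hA
        rcases hA with hA | hA
        · rw [Finset.mem_powersetCard] at hA; exact ⟨hA.1.trans hGtsub, hA.2⟩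
        · obtain ⟨B, hB, rfl⟩ := Finset.mem_image.1 hA
          obtain ⟨hBsub, hBcard⟩ := hM'mem B hB
          refine ⟨Finset.insert_subset hxG (hBsub.trans hGtsub), ?_⟩
          rw [Finset.card_insert_of_notMem (hxnot B hB), hBcard]
      · rw [hM, Finset.card_union_of_disjoint hdis, Finset.card_powersetCard, hGtcard,
          Finset.card_image_of_injOn hinj, hM'card]
        omega
      · rw [hub]
        set Cov := (G.powersetCard (r+1+1)).filter (fun D => ∀ j ∈ D, D.erase j ∈ M) with hCov
        have h1 : Gt.powersetCard (r+2) ⊆ Cov := by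
          intro D hD
          rw [Finset.mem_powersetCard] at hD
          rw [hCov, Finset.mem_filter, Finset.mem_powersetCard]
          refine ⟨⟨hD.1.trans hGtsub, hD.2⟩, fun j hj => ?_⟩
          rw [hM]
          apply Finset.mem_union_left
          rw [Finset.mem_powersetCard]
          exact ⟨(Finset.erase_subset _ _).trans hD.1, by simp [Finset.card_erase_of_mem hj, hD.2]⟩
        set Cov' := (Gt.powersetCard (r+1)).filter (fun D => ∀ j ∈ D, D.erase j ∈ M') with hCov'
        have h2 : Cov'.image (insert x) ⊆ Cov := by
          intro D hD
          obtain ⟨D', hD', rfl⟩ := Finset.mem_image.1 hD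
          rw [hCov', Finset.mem_filter, Finset.mem_powersetCard] at hD'
          obtain ⟨⟨hD'sub, hD'card⟩, hD'all⟩ := hD'
          have hxD' : x ∉ D' := fun h => hxGt (hD'sub h)
          rw [hCov, Finset.mem_filter, Finset.mem_powersetCard]
          refine ⟨⟨Finset.insert_subset hxG (hD'sub.trans hGtsub), by
            rw [Finset.card_insert_of_notMem hxD', hD'card]⟩, fun j hj => ?_⟩
          rcases Finset.mem_insert.1 hj with rfl | hj'
          · rw [Finset.erase_insert hxD', hM]
            apply Finset.mem_union_left
            rw [Finset.mem_powersetCard]; exact ⟨hD'sub, hD'card⟩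
          · have hxj : x ≠ j := fun h => hxD' (h ▸ hj')
            rw [Finset.erase_insert_of_ne hxj, hM]
            apply Finset.mem_union_right
            exact Finset.mem_image_of_mem _ (hD'all j hj')
        have hdis2 : Disjoint (Gt.powersetCard (r+2)) (Cov'.image (insert x)) := by
          rw [Finset.disjoint_left]
          intro D hD hD'
          rw [Finset.mem_powersetCard] at hD
          obtain ⟨B, hB, rfl⟩ := Finset.mem_image.1 hD'
          exact hxGt (hD.1 (Finset.mem_insert_self x B))
        have hinj2 : Set.InjOn (insert x) (Cov' : Set (Finset α)) := by
          intro A hA B hB h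
          simp only [hCov', Finset.coe_filter, Set.mem_setOf_eq, Finset.mem_powersetCard] at hA hB
          have hxA : x ∉ A := fun hh => hxGt (hA.1.1 hh)
          have hxB : x ∉ B := fun hh => hxGt (hB.1.1 hh)
          have h3 := congrArg (Finset.erase · x) h
          simpa [Finset.erase_insert hxA, Finset.erase_insert hxB] using h3
        have hcards : t.choose (r+2) + Cov'.card ≤ Cov.card := by
          have h4 := Finset.card_le_card (Finset.union_subset h1 h2)
          rw [Finset.card_union_of_disjoint hdis2, Finset.card_powersetCard, hGtcard,
            Finset.card_image_of_injOn hinj2] at h4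
          exact h4
        exact le_trans (Nat.add_le_add_left hM'cov _) hcards



/-- if `1 ≤ n < 2^k` has hypercube representation
`n = Σ_{ℓ=0}^{i} C(k,ℓ) + m` with `0 ≤ i ≤ k-1` and `0 ≤ m < C(k,i+1)`, then some
induced subgraph of `Q_k` on `n` vertices has at least
`Σ_{ℓ=0}^{i-1} C(k,ℓ) + m^(k-i-1)` full vertices; in particular
`φ_k(n) ≥ Σ_{ℓ=0}^{i-1} C(k,ℓ) + m^(k-i-1)` (the sum being empty when `i = 0`). -/
theorem phi_ge_formula (k n i m : ℕ) (hk : 0 < k) (h1 : 1 ≤ n) (h2 : n < 2 ^ k)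
    (hi : i ≤ k - 1) (hm : m < Nat.choose k (i + 1))
    (hn : n = ∑ ℓ ∈ Finset.range (i + 1), Nat.choose k ℓ + m) :
    (∃ S : Finset (Fin k → Bool), S.card = n ∧
        ∑ ℓ ∈ Finset.range i, Nat.choose k ℓ + ub (k - i - 1) m ≤ fullCount k S) ∧
      ∑ ℓ ∈ Finset.range i, Nat.choose k ℓ + ub (k - i - 1) m ≤ phi k n := by
  classical
  set r := k - i - 1 with hr
  have hik : i + 1 ≤ k := by omega
  have hCsymm : Nat.choose k r = Nat.choose k (i+1) := by
    have h3 := Nat.choose_symm hik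
    rw [show k - (i+1) = r by omega] at h3
    exact h3
  have hmr : m ≤ (Finset.univ : Finset (Fin k)).card.choose r := by
    rw [Finset.card_univ, Fintype.card_fin, hCsymm]; omega
  obtain ⟨M, hMmem, hMcard, hMcov⟩ := core r (Finset.univ : Finset (Fin k)) m hmr
  have hcomplinj : Function.Injective (fun A : Finset (Fin k) => Aᶜ) := by
    intro a b h; simpa using congrArg (·ᶜ) h
  set T : Finset (Finset (Fin k)) := M.image (fun A => Aᶜ) with hT
  have hTmem : ∀ B ∈ T, B.card = i + 1 := by
    intro B hB
    obtain ⟨A, hA, rfl⟩ := Finset.mem_image.1 hB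
    rw [Finset.card_compl, (hMmem A hA).2, Fintype.card_fin]
    omega
  set Sets := ((Finset.univ : Finset (Fin k)).powerset.filter (fun A => A.card < i + 1)) ∪ T with hSets
  have hdisj : Disjoint ((Finset.univ : Finset (Fin k)).powerset.filter (fun A => A.card < i + 1)) T := by
    rw [Finset.disjoint_left]
    intro A hA hB
    rw [Finset.mem_filter] at hA
    have := hTmem A hB
    omega
  set S := Sets.image (toVec k) with hS
  have hScard : S.card = n := by
    rw [hS, Finset.card_image_of_injective _ (toVec_inj k), hSets,
      Finset.card_union_of_disjoint hdisj, card_filter_card_lt, hT,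
      Finset.card_image_of_injective _ hcomplinj, hMcard, hn]
  set Cov := ((Finset.univ : Finset (Fin k)).powersetCard (r+1)).filter
      (fun D => ∀ j ∈ D, D.erase j ∈ M) with hCov
  set Low := (Finset.univ : Finset (Fin k)).powerset.filter (fun A => A.card < i) with hLow
  have hGoodcard : ∀ A ∈ Cov.image (fun D => Dᶜ), A.card = i := by
    intro A hA
    obtain ⟨D, hD, rfl⟩ := Finset.mem_image.1 hA
    rw [hCov, Finset.mem_filter, Finset.mem_powersetCard] at hD
    rw [Finset.card_compl, hD.1.2, Fintype.card_fin]
    omega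
  have hmemSets : ∀ A : Finset (Fin k), A.card < i + 1 → A ∈ Sets := by
    intro A hA
    rw [hSets]
    exact Finset.mem_union_left _ (Finset.mem_filter.2 ⟨Finset.mem_powerset.2 (Finset.subset_univ A), hA⟩)
  have hkey : ∀ A ∈ Low ∪ Cov.image (fun D => Dᶜ),
      toVec k A ∈ S ∧ ∀ j, flp (toVec k A) j ∈ S := by
    intro A hA
    have hcard : A.card ≤ i ∧ (A.card = i → ∀ j ∉ A, insert j A ∈ T) := by
      rcases Finset.mem_union.1 hA with h | h
      · rw [hLow, Finset.mem_filter] at h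
        exact ⟨by omega, fun he => absurd he (by omega)⟩
      · obtain ⟨D, hD, rfl⟩ := Finset.mem_image.1 h
        rw [hCov, Finset.mem_filter, Finset.mem_powersetCard] at hD
        have hDcard : D.card = r + 1 := hD.1.2
        have hcompl : Dᶜ.card = i := by
          rw [Finset.card_compl, hDcard, Fintype.card_fin]; omega
        refine ⟨le_of_eq hcompl, fun _ j hj => ?_⟩
        have hjD : j ∈ D := by simpa using hj
        have hins : insert j Dᶜ = (D.erase j)ᶜ := by
          ext x
          simp only [Finset.mem_insert, Finset.mem_compl, Finset.mem_erase]
          by_cases hx : x = j <;> simp [hx, hjD] <;> tauto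
        rw [hins, hT]
        exact Finset.mem_image_of_mem _ (hD.2 j hjD)
    constructor
    · exact Finset.mem_image_of_mem _ (hmemSets A (by omega))
    · intro j
      rw [flp_toVec]
      by_cases hj : j ∈ A
      · rw [if_pos hj]
        apply Finset.mem_image_of_mem
        apply hmemSets
        rw [Finset.card_erase_of_mem hj]
        omega
      · rw [if_neg hj]
        rcases Nat.lt_or_ge A.card i with hlt | hge
        · apply Finset.mem_image_of_mem
          apply hmemSets
          rw [Finset.card_insert_of_notMem hj]
          omega
        · have hAi : A.card = i := le_antisymm hcard.1 hge
          have hins := hcard.2 hAi j hj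
          apply Finset.mem_image_of_mem
          rw [hSets]
          exact Finset.mem_union_right _ hins
  set F := (Low ∪ Cov.image (fun D => Dᶜ)).image (toVec k) with hF
  have hdisj2 : Disjoint Low (Cov.image (fun D => Dᶜ)) := by
    rw [Finset.disjoint_left]
    intro A hA hB
    rw [hLow, Finset.mem_filter] at hA
    have := hGoodcard A hB
    omega
  have hFcard : ∑ ℓ ∈ Finset.range i, Nat.choose k ℓ + ub r m ≤ F.card := by
    rw [hF, Finset.card_image_of_injective _ (toVec_inj k),
      Finset.card_union_of_disjoint hdisj2, hLow, card_filter_card_lt,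
      Finset.card_image_of_injective _ hcomplinj]
    have hMcov2 : ub r m ≤ Cov.card := by
      rw [hCov]
      convert hMcov using 3
    exact Nat.add_le_add_left hMcov2 _
  have hfull : ∑ ℓ ∈ Finset.range i, Nat.choose k ℓ + ub r m ≤ fullCount k S := by
    refine le_trans hFcard (fullCount_ge S F ?_)
    intro v hv
    obtain ⟨A, hA, rfl⟩ := Finset.mem_image.1 hv
    exact hkey A hA
  refine ⟨⟨S, hScard, hfull⟩, le_trans hfull ?_⟩
  unfold phi
  apply Finset.le_sup (f := fullCount k)
  rw [Finset.mem_powersetCard]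
  exact ⟨Finset.subset_univ S, hScard⟩
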